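/- Let (Ω, μ) be a measure space, let p₁, p₂ : Ω → [0,∞) be measurable with ∫ p₁ dμ < ∞, ∫ p₂ dμ < ∞. Let φ : [0,∞)² → [0,∞) be continuous, strictly increasing in each coordinate, with φ(0,0)=0, lim_{t→∞} φ(tz) = ∞ for nonzero z, and let τ₀ > 0 satisfy φ(τ₀,τ₀) = 1. Define f(x) = +̃_φ(p₁(x), p₂(x)). Then f is integrable and ∫_Ω f dμ ≤ τ₀⁻¹ (∫_Ω p₁ dμ + ∫_Ω p₂ dμ). -/

import Mathlib

open Filter Set MeasureTheory

/-- The Orlicz addition of two nonnegative numbers: the unique `λ > 0` with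
`φ(a/λ, b/λ) = 1` when `a + b > 0`, and `0` when `a = b = 0`. -/
noncomputable def orliczAdd (φ : ℝ → ℝ → ℝ) (a b : ℝ) : ℝ :=
  sInf {l : ℝ | 0 < l ∧ φ (a / l) (b / l) = 1}

/-!
For `a, b ≥ 0` with `a + b > 0`, the map `l ↦ φ (a / l) (b / l)` is continuous and strictly
decreasing on `(0, ∞)`, tends to `∞` as `l → 0`, and is at most `φ τ₀ τ₀ = 1` at
`l = (a + b) / τ₀`. Hence it takes the value `1` at exactly one point, which is
`orliczAdd φ a b ≤ τ₀⁻¹ (a + b)`; monotonicity also gives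
`c ≤ orliczAdd φ a b ↔ 1 ≤ φ (a / c) (b / c)` for `c > 0`, so `x ↦ orliczAdd φ (p₁ x) (p₂ x)`
is measurable, and it is dominated by the integrable `τ₀⁻¹ (p₁ + p₂)`.
-/

theorem ContinuousOn.measurable_comp {α β γ : Type*} [MeasurableSpace α] [TopologicalSpace β]
    [MeasurableSpace β] [OpensMeasurableSpace β] [TopologicalSpace γ] [MeasurableSpace γ]
    [BorelSpace γ] {ψ : β → γ} {s : Set β} {g : α → β} (hψ : ContinuousOn ψ s)
    (hg : Measurable g) (hgs : ∀ x, g x ∈ s) : Measurable fun x => ψ (g x) :=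
  hψ.domRestrict.measurable.comp (hg.subtype_mk (h := hgs))

section OrliczAdd

variable {φ : ℝ → ℝ → ℝ} {a b : ℝ}

theorem orliczAdd_nonneg (φ : ℝ → ℝ → ℝ) (a b : ℝ) : 0 ≤ orliczAdd φ a b :=
  Real.sInf_nonneg fun _ hl => hl.1.le

theorem orliczAdd_zero_zero (h0 : φ 0 0 = 0) : orliczAdd φ 0 0 = 0 := by
  have hempty : {l : ℝ | 0 < l ∧ φ (0 / l) (0 / l) = 1} = ∅ := by
    simp [h0]
  rw [orliczAdd, hempty, Real.sInf_empty]

theorem strictAntiOn_apply_div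
    (hm1 : ∀ y : ℝ, 0 ≤ y → StrictMonoOn (fun x => φ x y) (Ici 0))
    (hm2 : ∀ x : ℝ, 0 ≤ x → StrictMonoOn (fun y => φ x y) (Ici 0))
    (ha : 0 ≤ a) (hb : 0 ≤ b) (hab : 0 < a + b) :
    StrictAntiOn (fun l => φ (a / l) (b / l)) (Ioi 0) := by
  intro l₁ (hl₁ : 0 < l₁) l₂ (hl₂ : 0 < l₂) hl
  have ha₁ : 0 ≤ a / l₁ := by positivity
  have hb₁ : 0 ≤ b / l₁ := by positivity
  have ha₂ : 0 ≤ a / l₂ := by positivity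
  have hb₂ : 0 ≤ b / l₂ := by positivity
  rcases ha.lt_or_eq with ha' | rfl
  · calc φ (a / l₂) (b / l₂) < φ (a / l₁) (b / l₂) :=
          hm1 _ hb₂ ha₂ ha₁ (by gcongr)
      _ ≤ φ (a / l₁) (b / l₁) := (hm2 _ ha₁).monotoneOn hb₂ hb₁ (by gcongr)
  · have hb' : 0 < b := by simpa using hab
    simpa only [zero_div] using hm2 0 le_rfl hb₂ hb₁ (by gcongr)

theorem apply_div_le_one
    (hm1 : ∀ y : ℝ, 0 ≤ y → StrictMonoOn (fun x => φ x y) (Ici 0))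
    (hm2 : ∀ x : ℝ, 0 ≤ x → StrictMonoOn (fun y => φ x y) (Ici 0))
    {τ₀ l : ℝ} (hτ : 0 < τ₀) (hτ1 : φ τ₀ τ₀ = 1) (ha : 0 ≤ a) (hb : 0 ≤ b) (hl : 0 < l)
    (habl : a + b ≤ τ₀ * l) : φ (a / l) (b / l) ≤ 1 := by
  have ha' : a / l ≤ τ₀ := by rw [div_le_iff₀ hl]; linarith
  have hb' : b / l ≤ τ₀ := by rw [div_le_iff₀ hl]; linarith
  calc φ (a / l) (b / l) ≤ φ τ₀ (b / l) :=
        (hm1 _ (div_nonneg hb hl.le)).monotoneOn (div_nonneg ha hl.le) hτ.le ha'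
    _ ≤ φ τ₀ τ₀ := (hm2 _ hτ.le).monotoneOn (div_nonneg hb hl.le) hτ.le hb'
    _ = 1 := hτ1

theorem orliczAdd_eq_of_apply_div_eq_one
    (hm1 : ∀ y : ℝ, 0 ≤ y → StrictMonoOn (fun x => φ x y) (Ici 0))
    (hm2 : ∀ x : ℝ, 0 ≤ x → StrictMonoOn (fun y => φ x y) (Ici 0))
    (ha : 0 ≤ a) (hb : 0 ≤ b) (hab : 0 < a + b) {l : ℝ} (hl : 0 < l)
    (hl1 : φ (a / l) (b / l) = 1) : orliczAdd φ a b = l := by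
  have hanti := strictAntiOn_apply_div hm1 hm2 ha hb hab
  have hsingleton : {l : ℝ | 0 < l ∧ φ (a / l) (b / l) = 1} = {l} := by
    ext l'
    refine ⟨fun ⟨hl', hl'1⟩ => hanti.injOn hl' hl (hl'1.trans hl1.symm), ?_⟩
    rintro rfl
    exact ⟨hl, hl1⟩
  rw [orliczAdd, hsingleton, csInf_singleton]

theorem exists_apply_div_eq_one
    (hc : ContinuousOn (fun z : ℝ × ℝ => φ z.1 z.2) (Ici 0 ×ˢ Ici 0))
    (hm1 : ∀ y : ℝ, 0 ≤ y → StrictMonoOn (fun x => φ x y) (Ici 0))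
    (hm2 : ∀ x : ℝ, 0 ≤ x → StrictMonoOn (fun y => φ x y) (Ici 0))
    (hlim : ∀ z₁ z₂ : ℝ, 0 ≤ z₁ → 0 ≤ z₂ → (z₁, z₂) ≠ (0, 0) →
      Tendsto (fun t => φ (t * z₁) (t * z₂)) atTop atTop)
    {τ₀ : ℝ} (hτ : 0 < τ₀) (hτ1 : φ τ₀ τ₀ = 1) (ha : 0 ≤ a) (hb : 0 ≤ b) (hab : 0 < a + b) :
    ∃ l, 0 < l ∧ φ (a / l) (b / l) = 1 := by
  have hne : (a, b) ≠ (0, 0) := by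
    rintro ⟨⟩
    simp at hab
  obtain ⟨t, ht1, ht0⟩ := ((hlim a b ha hb hne).eventually_ge_atTop 1 |>.and
    (eventually_gt_atTop 0)).exists
  have hsmall : 1 ≤ φ (a / t⁻¹) (b / t⁻¹) := by
    simpa only [div_inv_eq_mul, mul_comm _ t] using ht1
  have hlarge : φ (a / ((a + b) / τ₀)) (b / ((a + b) / τ₀)) ≤ 1 :=
    apply_div_le_one hm1 hm2 hτ hτ1 ha hb (by positivity)
      (mul_div_cancel₀ _ hτ.ne').ge
  have hcont : ContinuousOn (fun l => φ (a / l) (b / l)) (Ioi 0) := by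
    have hdiv (c : ℝ) : ContinuousOn (fun l : ℝ => c / l) (Ioi 0) :=
      continuousOn_const.div continuousOn_id fun l (hl : 0 < l) => hl.ne'
    refine hc.comp ((hdiv a).prodMk (hdiv b)) ?_
    intro l (hl : 0 < l)
    exact ⟨div_nonneg ha hl.le, div_nonneg hb hl.le⟩
  obtain ⟨l, hl, hl1⟩ := isPreconnected_Ioi.intermediate_value (show 0 < (a + b) / τ₀ by
    positivity) (inv_pos.2 ht0) hcont ⟨hlarge, hsmall⟩
  exact ⟨l, hl, hl1⟩

theorem orliczAdd_spec
    (hc : ContinuousOn (fun z : ℝ × ℝ => φ z.1 z.2) (Ici 0 ×ˢ Ici 0))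
    (hm1 : ∀ y : ℝ, 0 ≤ y → StrictMonoOn (fun x => φ x y) (Ici 0))
    (hm2 : ∀ x : ℝ, 0 ≤ x → StrictMonoOn (fun y => φ x y) (Ici 0))
    (hlim : ∀ z₁ z₂ : ℝ, 0 ≤ z₁ → 0 ≤ z₂ → (z₁, z₂) ≠ (0, 0) →
      Tendsto (fun t => φ (t * z₁) (t * z₂)) atTop atTop)
    {τ₀ : ℝ} (hτ : 0 < τ₀) (hτ1 : φ τ₀ τ₀ = 1) (ha : 0 ≤ a) (hb : 0 ≤ b) (hab : 0 < a + b) :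
    0 < orliczAdd φ a b ∧ φ (a / orliczAdd φ a b) (b / orliczAdd φ a b) = 1 := by
  obtain ⟨l, hl, hl1⟩ := exists_apply_div_eq_one hc hm1 hm2 hlim hτ hτ1 ha hb hab
  rw [orliczAdd_eq_of_apply_div_eq_one hm1 hm2 ha hb hab hl hl1]
  exact ⟨hl, hl1⟩

theorem orliczAdd_le
    (hc : ContinuousOn (fun z : ℝ × ℝ => φ z.1 z.2) (Ici 0 ×ˢ Ici 0))
    (hm1 : ∀ y : ℝ, 0 ≤ y → StrictMonoOn (fun x => φ x y) (Ici 0))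
    (hm2 : ∀ x : ℝ, 0 ≤ x → StrictMonoOn (fun y => φ x y) (Ici 0))
    (h0 : φ 0 0 = 0)
    (hlim : ∀ z₁ z₂ : ℝ, 0 ≤ z₁ → 0 ≤ z₂ → (z₁, z₂) ≠ (0, 0) →
      Tendsto (fun t => φ (t * z₁) (t * z₂)) atTop atTop)
    {τ₀ : ℝ} (hτ : 0 < τ₀) (hτ1 : φ τ₀ τ₀ = 1) (ha : 0 ≤ a) (hb : 0 ≤ b) :
    orliczAdd φ a b ≤ τ₀⁻¹ * (a + b) := by
  rcases (add_nonneg ha hb).eq_or_lt with hab | hab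
  · obtain ⟨rfl, rfl⟩ := (add_eq_zero_iff_of_nonneg ha hb).1 hab.symm
    simp [orliczAdd_zero_zero h0]
  obtain ⟨hpos, hlevel⟩ := orliczAdd_spec hc hm1 hm2 hlim hτ hτ1 ha hb hab
  have hbound : 0 < τ₀⁻¹ * (a + b) := by positivity
  refine ((strictAntiOn_apply_div hm1 hm2 ha hb hab).le_iff_ge hbound hpos).1 ?_
  rw [hlevel]
  exact apply_div_le_one hm1 hm2 hτ hτ1 ha hb hbound (mul_inv_cancel_left₀ hτ.ne' _).ge

theorem le_orliczAdd_iff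
    (hc : ContinuousOn (fun z : ℝ × ℝ => φ z.1 z.2) (Ici 0 ×ˢ Ici 0))
    (hm1 : ∀ y : ℝ, 0 ≤ y → StrictMonoOn (fun x => φ x y) (Ici 0))
    (hm2 : ∀ x : ℝ, 0 ≤ x → StrictMonoOn (fun y => φ x y) (Ici 0))
    (h0 : φ 0 0 = 0)
    (hlim : ∀ z₁ z₂ : ℝ, 0 ≤ z₁ → 0 ≤ z₂ → (z₁, z₂) ≠ (0, 0) →
      Tendsto (fun t => φ (t * z₁) (t * z₂)) atTop atTop)
    {τ₀ c : ℝ} (hτ : 0 < τ₀) (hτ1 : φ τ₀ τ₀ = 1) (ha : 0 ≤ a) (hb : 0 ≤ b) (hc0 : 0 < c) :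
    c ≤ orliczAdd φ a b ↔ 1 ≤ φ (a / c) (b / c) := by
  rcases (add_nonneg ha hb).eq_or_lt with hab | hab
  · obtain ⟨rfl, rfl⟩ := (add_eq_zero_iff_of_nonneg ha hb).1 hab.symm
    simp only [orliczAdd_zero_zero h0, zero_div, h0]
    exact iff_of_false hc0.not_ge zero_lt_one.not_ge
  obtain ⟨hpos, hlevel⟩ := orliczAdd_spec hc hm1 hm2 hlim hτ hτ1 ha hb hab
  conv_rhs => rw [← hlevel]
  exact ((strictAntiOn_apply_div hm1 hm2 ha hb hab).le_iff_ge hpos hc0).symm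

end OrliczAdd

theorem measurable_orliczAdd {Ω : Type*} [MeasurableSpace Ω] {φ : ℝ → ℝ → ℝ}
    {p₁ p₂ : Ω → ℝ} (hp₁m : Measurable p₁) (hp₂m : Measurable p₂)
    (hp₁0 : ∀ x, 0 ≤ p₁ x) (hp₂0 : ∀ x, 0 ≤ p₂ x)
    (hc : ContinuousOn (fun z : ℝ × ℝ => φ z.1 z.2) (Ici 0 ×ˢ Ici 0))
    (hm1 : ∀ y : ℝ, 0 ≤ y → StrictMonoOn (fun x => φ x y) (Ici 0))
    (hm2 : ∀ x : ℝ, 0 ≤ x → StrictMonoOn (fun y => φ x y) (Ici 0))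
    (h0 : φ 0 0 = 0)
    (hlim : ∀ z₁ z₂ : ℝ, 0 ≤ z₁ → 0 ≤ z₂ → (z₁, z₂) ≠ (0, 0) →
      Tendsto (fun t => φ (t * z₁) (t * z₂)) atTop atTop)
    {τ₀ : ℝ} (hτ : 0 < τ₀) (hτ1 : φ τ₀ τ₀ = 1) :
    Measurable fun x => orliczAdd φ (p₁ x) (p₂ x) := by
  refine measurable_of_Ici fun c => ?_
  rcases le_or_gt c 0 with hc0 | hc0
  · convert MeasurableSet.univ
    exact eq_univ_of_forall fun x => hc0.trans (orliczAdd_nonneg φ _ _)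
  have hlevel : Measurable fun x => φ (p₁ x / c) (p₂ x / c) :=
    hc.measurable_comp ((hp₁m.div_const c).prodMk (hp₂m.div_const c))
      fun x => ⟨div_nonneg (hp₁0 x) hc0.le, div_nonneg (hp₂0 x) hc0.le⟩
  convert measurableSet_le measurable_const hlevel using 1
  ext x
  exact le_orliczAdd_iff hc hm1 hm2 h0 hlim hτ hτ1 (hp₁0 x) (hp₂0 x) hc0

theorem orlicz_sum_integrable
    {Ω : Type*} [MeasurableSpace Ω] (μ : Measure Ω)
    (p₁ p₂ : Ω → ℝ) (hp₁m : Measurable p₁) (hp₂m : Measurable p₂)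
    (hp₁0 : ∀ x, 0 ≤ p₁ x) (hp₂0 : ∀ x, 0 ≤ p₂ x)
    (hp₁i : Integrable p₁ μ) (hp₂i : Integrable p₂ μ)
    (φ : ℝ → ℝ → ℝ)
    (hc : ContinuousOn (fun z : ℝ × ℝ => φ z.1 z.2) (Set.Ici 0 ×ˢ Set.Ici 0))
    (hm1 : ∀ y : ℝ, 0 ≤ y → StrictMonoOn (fun x => φ x y) (Set.Ici 0))
    (hm2 : ∀ x : ℝ, 0 ≤ x → StrictMonoOn (fun y => φ x y) (Set.Ici 0))
    (h0 : φ 0 0 = 0)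
    (hlim : ∀ z₁ z₂ : ℝ, 0 ≤ z₁ → 0 ≤ z₂ → (z₁, z₂) ≠ (0, 0) →
      Tendsto (fun t => φ (t * z₁) (t * z₂)) atTop atTop)
    (τ₀ : ℝ) (hτ : 0 < τ₀) (hτ1 : φ τ₀ τ₀ = 1) :
    Integrable (fun x => orliczAdd φ (p₁ x) (p₂ x)) μ ∧
      ∫ x, orliczAdd φ (p₁ x) (p₂ x) ∂μ ≤ τ₀⁻¹ * (∫ x, p₁ x ∂μ + ∫ x, p₂ x ∂μ) := by
  have hbound : ∀ x, orliczAdd φ (p₁ x) (p₂ x) ≤ τ₀⁻¹ * (p₁ x + p₂ x) := fun x =>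
    orliczAdd_le hc hm1 hm2 h0 hlim hτ hτ1 (hp₁0 x) (hp₂0 x)
  have hmajorant : Integrable (fun x => τ₀⁻¹ * (p₁ x + p₂ x)) μ :=
    (hp₁i.add hp₂i).const_mul τ₀⁻¹
  have hint : Integrable (fun x => orliczAdd φ (p₁ x) (p₂ x)) μ := by
    refine hmajorant.mono' (measurable_orliczAdd hp₁m hp₂m hp₁0 hp₂0 hc hm1 hm2 h0 hlim hτ
      hτ1).aestronglyMeasurable (ae_of_all _ fun x => ?_)
    rw [Real.norm_of_nonneg (orliczAdd_nonneg φ _ _)]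
    exact hbound x
  refine ⟨hint, ?_⟩
  calc ∫ x, orliczAdd φ (p₁ x) (p₂ x) ∂μ ≤ ∫ x, τ₀⁻¹ * (p₁ x + p₂ x) ∂μ :=
        integral_mono hint hmajorant hbound
    _ = τ₀⁻¹ * (∫ x, p₁ x ∂μ + ∫ x, p₂ x ∂μ) := by
        rw [integral_const_mul, integral_add hp₁i hp₂i]
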